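/- arXiv:1905.10673 — 2 statements merged into one kernel-verified Lean document; each statement's English description precedes it below -/
import Mathlib

section
/- Let I be a set, let F be a proper filter on I, let n ∈ ℕ, and for each k ∈ {0,1,...,n} let y_k : I → [0,1] be a function and C_k : [0,1] → [0,1] be an increasing connective. Suppose that the set { i ∈ I : min( C_0(y_0(i)), C_1(1 − y_1(i)), ..., C_n(1 − y_n(i)) ) = 0 } belongs to F. Then min( C_0(limsup_F y_0), C_1(1 − limsup_F y_1), ..., C_n(1 − limsup_F y_n) ) = 0. -/
open Filter

/-- `limsupF F g = inf_{J ∈ F} sup_{i ∈ J} g i`. -/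
noncomputable def limsupF {I : Type*} (F : Filter I) (g : I → ℝ) : ℝ :=
  ⨅ J : F.sets, ⨆ i : (J : Set I), g i.1

lemma mySup_mem {I : Type*} {F : Filter I} (hF : F.NeBot) {g : I → ℝ}
    (hg : ∀ i, g i ∈ Set.Icc (0:ℝ) 1) {J : Set I} (hJ : J ∈ F) :
    (⨆ i : J, g i.1) ∈ Set.Icc (0:ℝ) 1 := by
  obtain ⟨i0, hi0⟩ := F.nonempty_of_mem hJ
  haveI : Nonempty J := ⟨⟨i0, hi0⟩⟩
  have hbdd : BddAbove (Set.range fun i : J => g i.1) :=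
    ⟨1, by rintro x ⟨i, rfl⟩; exact (hg i.1).2⟩
  exact ⟨le_trans (hg i0).1 (le_ciSup hbdd ⟨i0, hi0⟩), ciSup_le fun i => (hg i.1).2⟩

lemma limsupF_bddBelow {I : Type*} {F : Filter I} (hF : F.NeBot) {g : I → ℝ}
    (hg : ∀ i, g i ∈ Set.Icc (0:ℝ) 1) :
    BddBelow (Set.range fun J : F.sets => ⨆ i : (J : Set I), g i.1) :=
  ⟨0, by rintro x ⟨J, rfl⟩; exact (mySup_mem hF hg J.2).1⟩

lemma limsupF_mem {I : Type*} {F : Filter I} (hF : F.NeBot) {g : I → ℝ}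
    (hg : ∀ i, g i ∈ Set.Icc (0:ℝ) 1) : limsupF F g ∈ Set.Icc (0:ℝ) 1 := by
  haveI : Nonempty F.sets := ⟨⟨Set.univ, Filter.univ_mem⟩⟩
  constructor
  · exact le_ciInf fun J => (mySup_mem hF hg J.2).1
  · exact le_trans (ciInf_le (limsupF_bddBelow hF hg) ⟨Set.univ, Filter.univ_mem⟩)
      (mySup_mem hF hg Filter.univ_mem).2

lemma limsupF_le_sup {I : Type*} {F : Filter I} (hF : F.NeBot) {g : I → ℝ}
    (hg : ∀ i, g i ∈ Set.Icc (0:ℝ) 1) {J : Set I} (hJ : J ∈ F) :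
    limsupF F g ≤ ⨆ i : J, g i.1 :=
  ciInf_le (limsupF_bddBelow hF hg) ⟨J, hJ⟩

lemma exists_forall_lt_of_limsupF_lt {I : Type*} {F : Filter I} (hF : F.NeBot) {g : I → ℝ}
    (hg : ∀ i, g i ∈ Set.Icc (0:ℝ) 1) {c : ℝ} (hc : limsupF F g < c) :
    ∃ J ∈ F, ∀ i ∈ J, g i < c := by
  obtain ⟨J, hJ⟩ := exists_lt_of_ciInf_lt hc
  refine ⟨J, J.2, fun i hi => ?_⟩
  have hbdd : BddAbove (Set.range fun i : (J : Set I) => g i.1) :=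
    ⟨1, by rintro x ⟨i, rfl⟩; exact (hg i.1).2⟩
  exact lt_of_le_of_lt (le_ciSup hbdd ⟨i, hi⟩) hJ

/-- If `F` is a proper filter on `I`, `y_0, …, y_n : I → [0,1]`, and `C_0, …, C_n` are
increasing connectives (continuous monotone maps of `[0,1]` to itself) such that
`{ i | min(C_0(y_0 i), C_1(1 - y_1 i), …, C_n(1 - y_n i)) = 0 } ∈ F`, then
`min(C_0(limsup_F y_0), C_1(1 - limsup_F y_1), …, C_n(1 - limsup_F y_n)) = 0`. -/
theorem stmt_4 {I : Type*} (F : Filter I) (hF : F.NeBot) (n : ℕ)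
    (y : Fin (n + 1) → I → ℝ) (hy : ∀ k i, y k i ∈ Set.Icc (0 : ℝ) 1)
    (C : Fin (n + 1) → ℝ → ℝ)
    (hmono : ∀ k, MonotoneOn (C k) (Set.Icc (0 : ℝ) 1))
    (hcont : ∀ k, ContinuousOn (C k) (Set.Icc (0 : ℝ) 1))
    (hmaps : ∀ k, Set.MapsTo (C k) (Set.Icc (0 : ℝ) 1) (Set.Icc (0 : ℝ) 1))
    (h : {i : I | (⨅ k : Fin (n + 1), C k (if k = 0 then y k i else 1 - y k i)) = 0} ∈ F) :
    (⨅ k : Fin (n + 1),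
        C k (if k = 0 then limsupF F (y k) else 1 - limsupF F (y k))) = 0 := by
  classical
  have hmem : ∀ k, limsupF F (y k) ∈ Set.Icc (0:ℝ) 1 := fun k => limsupF_mem hF (hy k)
  set t : Fin (n+1) → ℝ := fun k => if k = 0 then limsupF F (y k) else 1 - limsupF F (y k)
    with ht_def
  have htIcc : ∀ k, t k ∈ Set.Icc (0:ℝ) 1 := by
    intro k
    simp only [t]
    split_ifs
    · exact hmem k
    · exact ⟨by linarith [(hmem k).2], by linarith [(hmem k).1]⟩
  have hCnonneg : ∀ k, 0 ≤ C k (t k) := fun k => (hmaps k (htIcc k)).1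
  have hbddT : BddBelow (Set.range fun k => C k (t k)) := (Set.finite_range _).bddBelow
  have hgoal : (⨅ k, C k (t k)) = 0 := by
    refine le_antisymm ?_ (le_ciInf hCnonneg)
    suffices hK : ∃ k, C k (t k) = 0 by
      obtain ⟨k, hk⟩ := hK
      exact le_of_le_of_eq (ciInf_le hbddT k) hk
    by_cases hne : ∃ k, k ≠ 0 ∧ C k (t k) = 0
    · obtain ⟨k, _, hk⟩ := hne; exact ⟨k, hk⟩
    push_neg at hne
    refine ⟨0, ?_⟩
    have hpos : ∀ k, k ≠ 0 → 0 < C k (t k) :=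
      fun k hk => (hCnonneg k).lt_of_ne (Ne.symm (hne k hk))
    have key : ∀ k : Fin (n+1), ∃ J ∈ F, ∀ i ∈ J, k ≠ 0 → 0 < C k (1 - y k i) := by
      intro k
      by_cases hk0 : k = 0
      · exact ⟨Set.univ, Filter.univ_mem, fun i _ hk => absurd hk0 hk⟩
      have hCpos := hpos k hk0
      have htk : t k = 1 - limsupF F (y k) := if_neg hk0
      have hct : ContinuousWithinAt (C k) (Set.Icc 0 1) (t k) := hcont k (t k) (htIcc k)
      rw [Metric.continuousWithinAt_iff] at hct
      obtain ⟨δ, hδpos, hδ⟩ := hct _ hCpos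
      have hxpos : ∀ x ∈ Set.Icc (0:ℝ) 1, t k - δ/2 ≤ x → 0 < C k x := by
        intro x hx hge
        rcases le_or_gt (t k) x with hcase | hcase
        · exact lt_of_lt_of_le hCpos (hmono k (htIcc k) hx hcase)
        · have hd : dist x (t k) < δ := by
            rw [Real.dist_eq, abs_lt]; constructor <;> linarith
          have h2 := hδ hx hd
          rw [Real.dist_eq, abs_lt] at h2
          linarith [h2.1]
      have hlt : limsupF F (y k) < limsupF F (y k) + δ/2 := by linarith
      obtain ⟨J, hJF, hJ⟩ := exists_forall_lt_of_limsupF_lt hF (hy k) hlt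
      refine ⟨J, hJF, fun i hi _ => ?_⟩
      refine hxpos (1 - y k i) ⟨by linarith [(hy k i).2], by linarith [(hy k i).1]⟩ ?_
      rw [htk]
      linarith [hJ i hi]
    choose J hJF hJprop using key
    set S : Set I :=
      {i | (⨅ k : Fin (n+1), C k (if k = 0 then y k i else 1 - y k i)) = 0} ∩ ⋂ k, J k with hS
    have hSF : S ∈ F := Filter.inter_mem h (Filter.iInter_mem.mpr hJF)
    have hS0 : ∀ i ∈ S, C 0 (y 0 i) = 0 := by
      intro i hi
      obtain ⟨hi1, hi2⟩ := hi
      have hi1' : (⨅ k : Fin (n+1), C k (if k = 0 then y k i else 1 - y k i)) = 0 := hi1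
      obtain ⟨k, hk⟩ :=
        exists_eq_ciInf_of_finite (f := fun k : Fin (n+1) => C k (if k = 0 then y k i else 1 - y k i))
      rw [hi1'] at hk
      by_cases hk0 : k = 0
      · subst hk0; simpa using hk
      · exfalso
        have hp := hJprop k i (Set.mem_iInter.mp hi2 k) hk0
        rw [if_neg hk0] at hk
        linarith
    have ht0 : t 0 = limsupF F (y 0) := if_pos rfl
    rw [ht0]
    set L := limsupF F (y 0) with hL
    by_cases hex : ∃ i ∈ S, L ≤ y 0 i
    · obtain ⟨i, hiS, hLe⟩ := hex
      have h1 : C 0 L ≤ C 0 (y 0 i) := hmono 0 (hmem 0) (hy 0 i) hLe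
      have h2 := (hmaps 0 (hmem 0)).1
      rw [hS0 i hiS] at h1
      linarith
    · push_neg at hex
      obtain ⟨i0, hi0⟩ := F.nonempty_of_mem hSF
      have hLpos : 0 < L := lt_of_le_of_lt (hy 0 i0).1 (hex i0 hi0)
      have hzero : ∀ x, 0 ≤ x → x < L → C 0 x = 0 := by
        intro x hx0 hxL
        have hsup : L ≤ ⨆ i : S, y 0 i.1 := limsupF_le_sup hF (hy 0) hSF
        haveI : Nonempty S := ⟨⟨i0, hi0⟩⟩
        have hxsup : x < ⨆ i : S, y 0 i.1 := lt_of_lt_of_le hxL hsup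
        obtain ⟨i, hi⟩ := exists_lt_of_lt_ciSup hxsup
        have hxIcc : x ∈ Set.Icc (0:ℝ) 1 := ⟨hx0, le_trans hxL.le (hmem 0).2⟩
        have hle := hmono 0 hxIcc (hy 0 i.1) hi.le
        rw [hS0 i.1 i.2] at hle
        have hge := (hmaps 0 hxIcc).1
        linarith
      have hct : ContinuousWithinAt (C 0) (Set.Icc 0 1) L := hcont 0 L (hmem 0)
      rw [Metric.continuousWithinAt_iff] at hct
      by_contra hne0
      have hCpos : 0 < C 0 L := ((hmaps 0 (hmem 0)).1).lt_of_ne (Ne.symm hne0)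
      obtain ⟨δ, hδpos, hδ⟩ := hct _ hCpos
      set x := L - min (δ/2) (L/2) with hx
      have hmin : 0 < min (δ/2) (L/2) := lt_min (by linarith) (by linarith)
      have hminle1 := min_le_left (δ/2) (L/2)
      have hminle2 := min_le_right (δ/2) (L/2)
      have hx0 : 0 ≤ x := by simp only [x]; linarith
      have hxL : x < L := by simp only [x]; linarith
      have hxIcc : x ∈ Set.Icc (0:ℝ) 1 := ⟨hx0, le_trans hxL.le (hmem 0).2⟩
      have hdist : dist x L < δ := by
        rw [Real.dist_eq, abs_lt]
        constructor <;> simp only [x] <;> linarith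
      have hfin := hδ hxIcc hdist
      rw [hzero x hx0 hxL, Real.dist_eq, abs_lt] at hfin
      linarith [hfin.1]
  exact hgoal
end

section
/- Let λ be an infinite cardinal, let Z be a set of cardinality at most λ, let W be a set, and let ⟨X_ζ : ζ ∈ Z⟩ be a family of subsets of W each of cardinality exactly λ. Then there is a family ⟨Y_ζ : ζ ∈ Z⟩ of pairwise disjoint subsets of W such that Y_ζ ⊆ X_ζ and Y_ζ has cardinality exactly λ for each ζ ∈ Z. -/
universe u

open Cardinal

/-- Transfinite choice: along a well-order whose initial segments all have cardinality
less than `lam`, we can injectively pick one element from each set `A i` of cardinality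
`lam`. -/
theorem aux_choice_stmt_7 {I W : Type u} (r : I → I → Prop) (hwf : WellFounded r)
    (htri : ∀ p q, r p q ∨ p = q ∨ r q p)
    (lam : Cardinal.{u})
    (hseg : ∀ i, #{j // r j i} < lam)
    (A : I → Set W) (hA : ∀ i, #(A i) = lam) :
    ∃ F : I → W, Function.Injective F ∧ ∀ i, F i ∈ A i := by
  have hne : ∀ (i : I) (IH : ∀ j, r j i → W),
      (A i \ Set.range (fun j : {j // r j i} => IH j j.2)).Nonempty := by
    intro i IH
    rw [Set.diff_nonempty]
    intro hsub
    have h1 : #(A i) ≤ #(Set.range (fun j : {j // r j i} => IH j j.2)) :=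
      Cardinal.mk_le_mk_of_subset hsub
    have h2 := Cardinal.mk_range_le (f := fun j : {j // r j i} => IH j j.2)
    have := (h1.trans h2).trans_lt (hseg i)
    rw [hA i] at this
    exact lt_irrefl _ this
  set F : I → W := hwf.fix (fun i IH => (hne i IH).some) with hF
  have hfix : ∀ i, F i = (hne i (fun j _ => F j)).some := fun i =>
    hwf.fix_eq _ i
  have hmem : ∀ i, F i ∈ A i \ Set.range (fun j : {j // r j i} => F j.1) := by
    intro i
    have h := (hne i (fun j _ => F j)).some_mem
    rw [← hfix i] at h
    exact h
  refine ⟨F, ?_, fun i => (hmem i).1⟩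
  intro p q hpq
  rcases htri p q with h | h | h
  · exact ((hmem q).2 ⟨⟨p, h⟩, hpq⟩).elim
  · exact h
  · exact ((hmem p).2 ⟨⟨q, h⟩, hpq.symm⟩).elim

/-- Refinement lemma: if `λ` is an infinite cardinal, `Z` has cardinality at most `λ`, and
`⟨X ζ : ζ ∈ Z⟩` is a family of subsets of `W` each of cardinality exactly `λ`, then there is
a pairwise disjoint family `⟨Y ζ : ζ ∈ Z⟩` with `Y ζ ⊆ X ζ` and `Y ζ` of cardinality exactly
`λ` for each `ζ`. -/
theorem stmt_7 {Z W : Type u} (lam : Cardinal.{u}) (hlam : Cardinal.aleph0 ≤ lam)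
    (hZ : Cardinal.mk Z ≤ lam) (X : Z → Set W) (hX : ∀ ζ, Cardinal.mk (X ζ) = lam) :
    ∃ Y : Z → Set W, (∀ ζ η, ζ ≠ η → Disjoint (Y ζ) (Y η)) ∧
      (∀ ζ, Y ζ ⊆ X ζ) ∧ ∀ ζ, Cardinal.mk (Y ζ) = lam := by
  classical
  set T := lam.ord.ToType with hTdef
  have hT : #T = lam := Cardinal.mk_ord_toType lam
  obtain ⟨g⟩ : Nonempty (Z ↪ T) := by
    rw [← Cardinal.le_def, hT]; exact hZ
  -- small sets in T
  have hIio : ∀ i : T, #(Set.Iio i) < lam := fun i => Cardinal.mk_Iio_ord_toType i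
  have hIic : ∀ i : T, #(Set.Iic i) < lam := by
    intro i
    have h1 : Set.Iic i = insert i (Set.Iio i) := by
      ext x; simp [le_iff_lt_or_eq, or_comm]
    rw [h1]
    exact (Cardinal.mk_insert_le).trans_lt
      (Cardinal.add_lt_of_lt hlam (hIio i) (Cardinal.one_lt_aleph0.trans_le hlam))
  have hIci : ∀ i : T, #(Set.Ici i) = lam := by
    intro i
    have hsum := Cardinal.mk_sum_compl (Set.Iio i)
    rw [Set.compl_Iio, hT] at hsum
    have hle : #(Set.Ici i) ≤ lam := by
      have h2 := Cardinal.mk_set_le (Set.Ici i)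
      rwa [hT] at h2
    refine le_antisymm hle ?_
    by_contra h
    push_neg at h
    exact absurd hsum (Cardinal.add_lt_of_lt hlam (hIio i) h).ne
  -- the index type
  let I : Type u := {p : T × Z // g p.2 ≤ p.1}
  let e : I → T × T := fun p => (p.1.1, g p.1.2)
  have einj : Function.Injective e := by
    intro p q h
    have h' : (p.1.1, g p.1.2) = (q.1.1, g q.1.2) := h
    rw [Prod.mk.injEq] at h'
    exact Subtype.ext (Prod.ext h'.1 (g.injective h'.2))
  let r : I → I → Prop := fun p q => Prod.Lex (· < ·) (· < ·) (e p) (e q)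
  have hwf : WellFounded r :=
    InvImage.wf e (WellFounded.prod_lex wellFounded_lt wellFounded_lt)
  have htri : ∀ p q : I, r p q ∨ p = q ∨ r q p := by
    intro p q
    rcases lt_trichotomy (e p).1 (e q).1 with h | h | h
    · exact Or.inl (Prod.lex_iff.mpr (Or.inl h))
    · rcases lt_trichotomy (e p).2 (e q).2 with h' | h' | h'
      · exact Or.inl (Prod.lex_iff.mpr (Or.inr ⟨h, h'⟩))
      · exact Or.inr (Or.inl (einj (Prod.ext h h')))
      · exact Or.inr (Or.inr (Prod.lex_iff.mpr (Or.inr ⟨h.symm, h'⟩)))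
    · exact Or.inr (Or.inr (Prod.lex_iff.mpr (Or.inl h)))
  have hseg : ∀ p : I, #{q // r q p} < lam := by
    intro p
    have hle : ∀ q : {q // r q p}, q.1.1.1 ≤ p.1.1 := by
      rintro ⟨q, hq⟩
      rcases Prod.lex_iff.mp hq with h | ⟨h, -⟩
      · exact le_of_lt h
      · exact le_of_eq h
    have hle2 : ∀ q : {q // r q p}, g q.1.1.2 ≤ p.1.1 := fun q =>
      le_trans q.1.2 (hle q)
    have hinj : Function.Injective
        (fun q : {q // r q p} => ((⟨q.1.1.1, hle q⟩, ⟨g q.1.1.2, hle2 q⟩) :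
          Set.Iic p.1.1 × Set.Iic p.1.1)) := by
      intro a b h
      have h1 : a.1.1.1 = b.1.1.1 := congrArg (fun x => (x.1 : T)) h
      have h2 : g a.1.1.2 = g b.1.1.2 := congrArg (fun x => (x.2 : T)) h
      exact Subtype.ext (einj (Prod.ext h1 h2))
    have := Cardinal.mk_le_of_injective hinj
    simp only [Cardinal.mk_prod, Cardinal.lift_id] at this
    exact this.trans_lt (Cardinal.mul_lt_of_lt hlam (hIic _) (hIic _))
  obtain ⟨F, Finj, Fmem⟩ := aux_choice_stmt_7 r hwf htri lam hseg
    (fun p => X p.1.2) (fun p => hX p.1.2)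
  refine ⟨fun ζ => F '' {p : I | p.1.2 = ζ}, ?_, ?_, ?_⟩
  · intro ζ η hne
    rw [Set.disjoint_left]
    rintro x ⟨p, hp, rfl⟩ ⟨q, hq, hqp⟩
    exact hne (hp ▸ (congrArg (fun p : I => p.1.2) (Finj hqp)) ▸ hq)
  · rintro ζ x ⟨p, hp, rfl⟩
    have := Fmem p
    rwa [show p.1.2 = ζ from hp] at this
  · intro ζ
    rw [Cardinal.mk_image_eq Finj]
    have equ : {p : I | p.1.2 = ζ} ≃ Set.Ici (g ζ) :=
      { toFun := fun q => ⟨q.1.1.1, by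
          have := q.1.2
          rw [show q.1.1.2 = ζ from q.2] at this
          exact this⟩
        invFun := fun a => ⟨⟨(a.1, ζ), a.2⟩, rfl⟩
        left_inv := by
          rintro ⟨⟨⟨a, z⟩, h1⟩, h2⟩
          simp only [Set.mem_setOf_eq] at h2
          subst h2
          rfl
        right_inv := fun a => rfl }
    rw [Cardinal.mk_congr equ]
    exact hIci (g ζ)
end
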